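/- Let k be an arbitrary field, X = (X_{ij}) a 3×3 matrix of indeterminates, and A = k[X]/I_2 the quotient of the polynomial ring by the ideal generated by all 2×2 minors of X, with x_{ij} the images of X_{ij}. Then for every integer n ≥ 2, the element x_{33} is a nonzerodivisor on A/(x_{11}^n, x_{12}^n). -/

import Mathlib

/-!
Common definitions: Tor and Ext functors are taken from Mathlib's category-theoretic
derived functors on `ModuleCat R`.  Projective dimension, depth, Gorenstein, etc. are
defined via their standard homological characterizations.
-/

open CategoryTheory Limits IsLocalRing

universe u

set_option maxHeartbeats 1000000
set_option synthInstance.maxHeartbeats 400000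

noncomputable section

/-- Vanishing of `Tor_i^R(M, N)`. -/
def TorVanishes (R : Type u) [CommRing R] (M N : ModuleCat.{u} R) (i : ℕ) : Prop :=
  IsZero (((Tor (ModuleCat.{u} R) i).obj M).obj N)

/-- `M` has projective dimension at most `n`: `Ext^i_R(M, -) = 0` for all `i > n`. -/
def ProjDimLE (R : Type u) [CommRing R] (M : Type u) [AddCommGroup M] [Module R M]
    (n : ℕ) : Prop :=
  ∀ (N : ModuleCat.{u} R) (i : ℕ), n < i →
    IsZero (((Ext R (ModuleCat.{u} R) i).obj (Opposite.op (ModuleCat.of R M))).obj N)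

/-- `M` has finite projective dimension over `R`. -/
def HasFinProjDim (R : Type u) [CommRing R] (M : Type u) [AddCommGroup M] [Module R M] : Prop :=
  ∃ n : ℕ, ProjDimLE R M n

/-- The projective dimension of `M` as an element of `ℕ∞` (`⊤` if infinite). -/
def projDim (R : Type u) [CommRing R] (M : Type u) [AddCommGroup M] [Module R M] : ℕ∞ :=
  sInf ((fun n : ℕ => (n : ℕ∞)) '' {n : ℕ | ProjDimLE R M n})

/-- An `R`-module `N` is strongly rigid if for every `i ≥ 1` and every finitely generated
`R`-module `M`, the vanishing of `Tor_i^R(M, N)` implies that `M` has finite projective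
dimension. -/
def StronglyRigid (R : Type u) [CommRing R] (N : Type u) [AddCommGroup N] [Module R N] : Prop :=
  ∀ (M : Type u) [AddCommGroup M] [Module R M], Module.Finite R M →
    ∀ i : ℕ, 1 ≤ i → TorVanishes R (ModuleCat.of R M) (ModuleCat.of R N) i →
      HasFinProjDim R M

/-- `{}^{f^n}R` : the ring `R` viewed as an `R`-module via the `n`-th iterate of the Frobenius
endomorphism, i.e. `r • s = r ^ (p ^ n) * s`. -/
def FrobModule (R : Type u) [CommRing R] (p : ℕ) [Fact p.Prime] [CharP R p] (n : ℕ) :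
    Type u := R

instance (R : Type u) [CommRing R] (p : ℕ) [Fact p.Prime] [CharP R p] (n : ℕ) :
    AddCommGroup (FrobModule R p n) := inferInstanceAs (AddCommGroup R)

instance (R : Type u) [CommRing R] (p : ℕ) [Fact p.Prime] [CharP R p] (n : ℕ) :
    Module R (FrobModule R p n) := Module.compHom R (iterateFrobenius R p n)

/-- The `n`-th Frobenius functor `F^n(M) = M ⊗_R {}^{f^n}R`, i.e. base change along the
`n`-th iterate of the Frobenius endomorphism, viewed as an `R`-module via the target
(right-hand) copy of `R`. -/
def frobF (R : Type u) [CommRing R] (p : ℕ) [Fact p.Prime] [CharP R p] (n : ℕ)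
    (M : ModuleCat.{u} R) : ModuleCat.{u} R :=
  (ModuleCat.extendScalars (iterateFrobenius R p n)).obj M

/-- Depth of a module with respect to an ideal `I` (Rees' characterization):
`depth_I M = inf { i | Ext^i_R(R/I, M) ≠ 0 }`, an element of `ℕ∞`. -/
def idealDepth (R : Type u) [CommRing R] (I : Ideal R) (M : Type u) [AddCommGroup M]
    [Module R M] : ℕ∞ :=
  sInf ((fun i : ℕ => (i : ℕ∞)) ''
    {i : ℕ | ¬ IsZero (((Ext R (ModuleCat.{u} R) i).obj
      (Opposite.op (ModuleCat.of R (R ⧸ I)))).obj (ModuleCat.of R M))})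

/-- The depth of a module over a local ring. -/
def moduleDepth (R : Type u) [CommRing R] [IsLocalRing R] (M : Type u) [AddCommGroup M]
    [Module R M] : ℕ∞ :=
  idealDepth R (maximalIdeal R) M

/-- The dimension of a module: the Krull dimension of its support. -/
def moduleDim (R : Type u) [CommRing R] (M : Type u) [AddCommGroup M] [Module R M] :
    WithBot ℕ∞ :=
  Order.krullDim (Module.support R M)

/-- A module over a local ring is Cohen–Macaulay if its depth equals its dimension. -/
def IsCMModule (R : Type u) [CommRing R] [IsLocalRing R] (M : Type u) [AddCommGroup M]
    [Module R M] : Prop :=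
  (moduleDepth R M : WithBot ℕ∞) = moduleDim R M

/-- A Gorenstein local ring: a Noetherian local ring such that `R` has finite injective
dimension as a module over itself (equivalently, `Ext^i_R(-, R) = 0` for all `i` large). -/
def IsGorensteinLocalRing (R : Type u) [CommRing R] : Prop :=
  IsNoetherianRing R ∧ IsLocalRing R ∧ ∃ n : ℕ, ∀ (M : ModuleCat.{u} R) (i : ℕ), n < i →
    IsZero (((Ext R (ModuleCat.{u} R) i).obj (Opposite.op M)).obj (ModuleCat.of R R))

/-- A regular local ring: a Noetherian local ring whose maximal ideal is generated by
`dim R` elements. -/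
def IsRegularLocal (R : Type u) [CommRing R] : Prop :=
  IsNoetherianRing R ∧ ∃ _h : IsLocalRing R, ∃ s : Finset R,
    Ideal.span (s : Set R) = maximalIdeal R ∧ ((s.card : ℕ∞) : WithBot ℕ∞) = ringKrullDim R

/-- The infinite projective dimension locus of `M`:
`IPD(M) = { p | pd_{R_p} M_p = ∞ }`. -/
def IPD (R : Type u) [CommRing R] (M : Type u) [AddCommGroup M] [Module R M] :
    Set (PrimeSpectrum R) :=
  {P | ¬ HasFinProjDim (Localization.AtPrime P.asIdeal)
    (LocalizedModule P.asIdeal.primeCompl M)}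

/-- The finite projective dimension locus of `M`. -/
def FPD (R : Type u) [CommRing R] (M : Type u) [AddCommGroup M] [Module R M] :
    Set (PrimeSpectrum R) :=
  {P | HasFinProjDim (Localization.AtPrime P.asIdeal)
    (LocalizedModule P.asIdeal.primeCompl M)}

/-- An `R`-module `N` is locally strongly rigid if `N_P` is a strongly rigid `R_P`-module for
every prime ideal `P`. -/
def LocallyStronglyRigid (R : Type u) [CommRing R] (N : Type u) [AddCommGroup N]
    [Module R N] : Prop :=
  ∀ P : PrimeSpectrum R, StronglyRigid (Localization.AtPrime P.asIdeal)
    (LocalizedModule P.asIdeal.primeCompl N)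

/-- The `n`-th strong rigidity locus of `R`: the primes `P` such that `({}^{f^n}R)_P` is a
strongly rigid `R_P`-module. -/
def SRLocus (R : Type u) [CommRing R] (p : ℕ) [Fact p.Prime] [CharP R p] (n : ℕ) :
    Set (PrimeSpectrum R) :=
  {P | StronglyRigid (Localization.AtPrime P.asIdeal)
    (LocalizedModule P.asIdeal.primeCompl (FrobModule R p n))}

/-- The length of a module: the Krull dimension of its lattice of submodules
(`⊤` when the module does not have finite length). -/
def moduleLength (R : Type u) [CommRing R] (M : Type u) [AddCommGroup M] [Module R M] : ℕ∞ :=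
  WithBot.unbotD 0 (Order.krullDim (Submodule R M))

/-- Serre's condition `(S_k)`: `depth M_p ≥ min(k, dim M_p)` for all primes `p` in the
support of `M`. -/
def SerreCondS (R : Type u) [CommRing R] (M : Type u) [AddCommGroup M] [Module R M]
    (k : ℕ) : Prop :=
  ∀ P : PrimeSpectrum R, P ∈ Module.support R M →
    min ((k : ℕ∞) : WithBot ℕ∞)
        (moduleDim (Localization.AtPrime P.asIdeal) (LocalizedModule P.asIdeal.primeCompl M))
      ≤ (moduleDepth (Localization.AtPrime P.asIdeal)
          (LocalizedModule P.asIdeal.primeCompl M) : WithBot ℕ∞)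

theorem charP_quotient_of_ne_top {R : Type u} [CommRing R] (p : ℕ) [Fact p.Prime] [CharP R p]
    (I : Ideal R) (h : I ≠ ⊤) : CharP (R ⧸ I) p := by
  haveI : Nontrivial (R ⧸ I) := Ideal.Quotient.nontrivial_iff.mpr h
  have h0 : (p : R ⧸ I) = 0 := by
    rw [← map_natCast (Ideal.Quotient.mk I) p, CharP.cast_eq_zero R p, map_zero]
  rcases (Nat.Prime.eq_one_or_self_of_dvd Fact.out _ (ringChar.dvd h0)) with h1 | h1
  · haveI := ringChar.of_eq h1
    exact absurd rfl (CharP.char_ne_one (R ⧸ I) 1)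
  · exact ringChar.of_eq h1

instance charP_localization_atPrime {R : Type u} [CommRing R] (p : ℕ) [Fact p.Prime]
    [CharP R p] (P : Ideal R) [P.IsPrime] : CharP (Localization.AtPrime P) p := by
  have h0 : (p : Localization.AtPrime P) = 0 := by
    rw [← map_natCast (algebraMap R (Localization.AtPrime P)) p, CharP.cast_eq_zero R p,
      map_zero]
  rcases (Nat.Prime.eq_one_or_self_of_dvd Fact.out _ (ringChar.dvd h0)) with h1 | h1
  · haveI := ringChar.of_eq h1
    exact absurd rfl (CharP.char_ne_one (Localization.AtPrime P) 1)
  · exact ringChar.of_eq h1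

open MvPolynomial in
/-- The nine 2×2 minors of the generic 3×3 matrix `X = (X_{ij})`. -/
def genericMinors (k : Type u) [CommRing k] : Set (MvPolynomial (Fin 3 × Fin 3) k) :=
  {f | ∃ i j a b : Fin 3, i < j ∧ a < b ∧
    f = X (i, a) * X (j, b) - X (i, b) * X (j, a)}

/-- The ideal `I_2(X)` generated by the 2×2 minors of the generic 3×3 matrix. -/
def DetIdeal (k : Type u) [CommRing k] : Ideal (MvPolynomial (Fin 3 × Fin 3) k) :=
  Ideal.span (genericMinors k)

/-- The determinantal ring `A = k[X]/I_2(X)`. -/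
abbrev DetRing (k : Type u) [CommRing k] : Type u :=
  MvPolynomial (Fin 3 × Fin 3) k ⧸ DetIdeal k

/-- The image `x_{ij}` of the variable `X_{ij}` in the determinantal ring. -/
def xvar (k : Type u) [CommRing k] (i j : Fin 3) : DetRing k :=
  Ideal.Quotient.mk (DetIdeal k) (MvPolynomial.X (i, j))

instance detRing_charP (k : Type u) [CommRing k] (p : ℕ) [Fact p.Prime] [CharP k p] :
    CharP (DetRing k) p := by
  apply CharP.quotient' p
  intro x hx
  have hker : DetIdeal k ≤
      RingHom.ker (MvPolynomial.eval (fun _ : Fin 3 × Fin 3 => (0 : k))) := by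
    rw [DetIdeal, Ideal.span_le]
    rintro f ⟨i, j, a, b, hij, hab, rfl⟩
    simp [RingHom.mem_ker]
  have h1 : ((x : k)) = 0 := by
    have := hker hx
    rwa [RingHom.mem_ker, map_natCast] at this
  calc ((x : ℕ) : MvPolynomial (Fin 3 × Fin 3) k)
      = MvPolynomial.C ((x : ℕ) : k) := (map_natCast (MvPolynomial.C) x).symm
    _ = 0 := by rw [h1, map_zero]

/-- The homogeneous maximal ideal `(x_{ij})` of the determinantal ring. -/
def detMax (k : Type u) [CommRing k] : Ideal (DetRing k) :=
  Ideal.span (Set.range fun ij : Fin 3 × Fin 3 => xvar k ij.1 ij.2)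

theorem detIdeal_le_ker (k : Type u) [CommRing k] :
    DetIdeal k ≤ RingHom.ker (MvPolynomial.eval (fun _ : Fin 3 × Fin 3 => (0 : k))) := by
  rw [DetIdeal, Ideal.span_le]
  rintro f ⟨i, j, a, b, hij, hab, rfl⟩
  simp [RingHom.mem_ker]

instance detMax_isPrime (k : Type u) [Field k] : (detMax k).IsPrime := by
  classical
  set ψ : DetRing k →+* k :=
    Ideal.Quotient.lift (DetIdeal k) (MvPolynomial.eval (fun _ : Fin 3 × Fin 3 => (0 : k)))
      (fun a ha => RingHom.mem_ker.mp (detIdeal_le_ker k ha)) with hψ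
  have h : detMax k = RingHom.ker ψ := by
    apply le_antisymm
    · rw [detMax, Ideal.span_le]
      rintro _ ⟨ij, rfl⟩
      simp [RingHom.mem_ker, hψ, xvar]
    · rintro g hg
      obtain ⟨f, rfl⟩ := Ideal.Quotient.mk_surjective g
      have hf : MvPolynomial.constantCoeff f = 0 := by
        have := hg
        rw [RingHom.mem_ker, hψ, Ideal.Quotient.lift_mk] at this
        rwa [MvPolynomial.eval_zero'] at this
      have hmem : f ∈ Ideal.span (MvPolynomial.X '' (Set.univ : Set (Fin 3 × Fin 3))) := by
        rw [MvPolynomial.mem_ideal_span_X_image]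
        intro m hm
        by_contra hnc
        push_neg at hnc
        have hm0 : m = 0 := by
          ext i
          exact hnc i (Set.mem_univ i)
        have := MvPolynomial.mem_support_iff.mp hm
        rw [hm0] at this
        exact this (by rwa [MvPolynomial.constantCoeff_eq] at hf)
      have hmap := Ideal.mem_map_of_mem (Ideal.Quotient.mk (DetIdeal k)) hmem
      rw [Ideal.map_span] at hmap
      have himg : (Ideal.Quotient.mk (DetIdeal k)) ''
          (MvPolynomial.X '' (Set.univ : Set (Fin 3 × Fin 3)))
          = Set.range fun ij : Fin 3 × Fin 3 => xvar k ij.1 ij.2 := by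
        ext y
        constructor
        · rintro ⟨_, ⟨ij, -, rfl⟩, rfl⟩
          exact ⟨ij, rfl⟩
        · rintro ⟨ij, rfl⟩
          exact ⟨MvPolynomial.X ij, ⟨ij, Set.mem_univ _, rfl⟩, rfl⟩
      rw [himg] at hmap
      exact hmap
  rw [h]
  exact RingHom.ker_isPrime ψ


/-!
The Segre map `X_{ij} ↦ s_i t_j` identifies `A` with the subring of `k[s, t]` spanned by the
monomials with as many `s`'s as `t`'s, i.e. with the weight-zero part for the weight
`s_i ↦ 1`, `t_j ↦ -1`. Injectivity: two monomials in the `X_{ij}` with the same row and column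
sums are congruent modulo the 2×2 minors, since a minor moves one unit of exponent around a
rectangle. Since the weight-zero component is linear over this subring, `JP ∩ A = J` for
every ideal `J` of `A`. In `P = k[s, t]`, `x_{33} = s_3 t_3` is a nonzerodivisor modulo the
monomial ideal `(s_1^n t_1^n, s_1^n t_2^n)`, whose generators involve neither `s_3` nor `t_3`,
and this descends to `A/(x_{11}^n, x_{12}^n)`.
-/

open MvPolynomial

attribute [local instance] MvPolynomial.weightedGradedAlgebra in
theorem MvPolynomial.weightedHomogeneousComponent_mul_of_isWeightedHomogeneous_zero
    {σ R M : Type*} [CommSemiring R] [AddCommMonoid M] [DecidableEq M] {w : σ → M}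
    {b : MvPolynomial σ R} (hb : IsWeightedHomogeneous w b 0) (a : MvPolynomial σ R) (m : M) :
    weightedHomogeneousComponent w m (a * b) = weightedHomogeneousComponent w m a * b := by
  simp_rw [← weightedDecomposition.decompose'_apply]
  exact DirectSum.coe_decompose_mul_of_right_mem_zero (weightedHomogeneousSubmodule R w) hb

theorem MvPolynomial.mem_ideal_span_monomial_image_of_monomial_mul_mem {σ R : Type*}
    [CommSemiring R] {s : Set (σ →₀ ℕ)} {e : σ →₀ ℕ} {f : MvPolynomial σ R}
    (hs : ∀ t ∈ s, Disjoint t.support e.support)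
    (h : monomial e 1 * f ∈ Ideal.span ((fun t => monomial t (1 : R)) '' s)) :
    f ∈ Ideal.span ((fun t => monomial t (1 : R)) '' s) := by
  rw [mem_ideal_span_monomial_image] at h ⊢
  intro m hm
  obtain ⟨t, ht, hle⟩ := h (e + m) (by
    rw [mem_support_iff, coeff_monomial_mul, one_mul]
    exact mem_support_iff.mp hm)
  refine ⟨t, ht, fun x => ?_⟩
  by_cases hx : t x = 0
  · simp [hx]
  · have hex : e x = 0 := Finsupp.notMem_support_iff.mp <|
      Finset.disjoint_left.mp (hs t ht) (Finsupp.mem_support_iff.mpr hx)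
    simpa [hex] using hle x

section Segre

variable {ι κ : Type*}

def rowColSums : (ι × κ →₀ ℕ) →+ (ι ⊕ κ →₀ ℕ) :=
  Finsupp.mapDomain.addMonoidHom (Sum.inl ∘ Prod.fst) +
    Finsupp.mapDomain.addMonoidHom (Sum.inr ∘ Prod.snd)

@[simp]
lemma rowColSums_single (i : ι) (j : κ) (m : ℕ) :
    rowColSums (Finsupp.single (i, j) m) =
      Finsupp.single (Sum.inl i) m + Finsupp.single (Sum.inr j) m := by
  simp [rowColSums, Finsupp.mapDomain_single]

lemma rowColSums_inl_ne_zero_iff {d : ι × κ →₀ ℕ} {i : ι} :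
    rowColSums d (Sum.inl i) ≠ 0 ↔ ∃ j, d (i, j) ≠ 0 := by
  classical
  simp [rowColSums, ← Finsupp.mem_support_iff, Finsupp.mapDomain_support_of_subsingletonAddUnits]

lemma rowColSums_inr_ne_zero_iff {d : ι × κ →₀ ℕ} {j : κ} :
    rowColSums d (Sum.inr j) ≠ 0 ↔ ∃ i, d (i, j) ≠ 0 := by
  classical
  simp [rowColSums, -Finsupp.mem_support_iff, ← Finsupp.notMem_support_iff,
    Finsupp.mapDomain_support_of_subsingletonAddUnits]

def segreWeight : ι ⊕ κ → ℤ := Sum.elim (fun _ => 1) (fun _ => -1)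

lemma weight_rowColSums (d : ι × κ →₀ ℕ) : Finsupp.weight segreWeight (rowColSums d) = 0 := by
  induction d using Finsupp.induction with
  | zero => simp
  | single_add p m d _ _ ih =>
    rw [map_add, map_add, ih, rowColSums_single]
    simp [Finsupp.weight_single, segreWeight]

theorem exists_rowColSums_eq {μ : ι ⊕ κ →₀ ℕ} (hμ : Finsupp.weight segreWeight μ = 0) :
    ∃ d, rowColSums d = μ := by
  obtain ⟨N, hN⟩ : ∃ N, μ.degree = N := ⟨_, rfl⟩
  induction N using Nat.strong_induction_on generalizing μ with
  | _ N ih =>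
    rcases Nat.eq_zero_or_pos N with rfl | hNpos
    · exact ⟨0, by simp [(Finsupp.degree_eq_zero_iff μ).mp hN]⟩
    have hconst : ∀ s : ℤ, (∀ x ∈ μ.support, segreWeight x = s) →
        Finsupp.weight segreWeight μ = N * s := by
      intro s hs
      rw [Finsupp.weight_apply, Finsupp.sum, ← hN, Finsupp.degree_apply, Nat.cast_sum,
        Finset.sum_mul]
      exact Finset.sum_congr rfl fun x hx => by rw [hs x hx, nsmul_eq_mul]
    obtain ⟨i, hi⟩ : ∃ i, μ (Sum.inl i) ≠ 0 := by
      by_contra! h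
      have := hconst (-1) (by rintro (i | j) hx; exacts [absurd (h i) (by simpa using hx), rfl])
      omega
    obtain ⟨j, hj⟩ : ∃ j, μ (Sum.inr j) ≠ 0 := by
      by_contra! h
      have := hconst 1 (by rintro (i | j) hx; exacts [rfl, absurd (h j) (by simpa using hx)])
      omega
    obtain ⟨μ₁, rfl⟩ :=
      exists_add_of_le (Finsupp.single_le_iff.mpr (Nat.one_le_iff_ne_zero.mpr hi))
    obtain ⟨μ₂, rfl⟩ : ∃ μ₂, μ₁ = Finsupp.single (Sum.inr j) 1 + μ₂ :=
      exists_add_of_le (Finsupp.single_le_iff.mpr (Nat.one_le_iff_ne_zero.mpr (by simpa using hj)))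
    obtain ⟨d, hd⟩ := ih μ₂.degree (by simp at hN; omega)
      (by simpa [Finsupp.weight_single, segreWeight] using hμ) rfl
    exact ⟨Finsupp.single (i, j) 1 + d, by rw [map_add, hd, rowColSums_single, add_assoc]⟩

variable (k : Type*) [CommRing k]

def segreMap : MvPolynomial (ι × κ) k →ₐ[k] MvPolynomial (ι ⊕ κ) k :=
  aeval fun p => X (Sum.inl p.1) * X (Sum.inr p.2)

variable {k}

lemma segreMap_monomial (d : ι × κ →₀ ℕ) (c : k) :
    segreMap k (monomial d c) = monomial (rowColSums d) c := by
  induction d using Finsupp.induction with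
  | zero => simp [segreMap]
  | single_add p m d _ _ ih =>
    obtain ⟨i, j⟩ := p
    rw [← one_mul c, ← monomial_mul, ← X_pow_eq_monomial, map_mul, ih, map_add, rowColSums_single,
      map_pow, segreMap, aeval_X, mul_pow, X_pow_eq_monomial, X_pow_eq_monomial, monomial_mul,
      monomial_mul, one_mul, add_assoc]

lemma isWeightedHomogeneous_segreMap (p : MvPolynomial (ι × κ) k) :
    IsWeightedHomogeneous segreWeight (segreMap k p) 0 := by
  induction p using MvPolynomial.induction_on' with
  | monomial d c =>
    rw [segreMap_monomial]
    exact isWeightedHomogeneous_monomial _ _ _ (weight_rowColSums d)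
  | add p q hp hq => simpa using hp.add hq

lemma mem_range_segreMap {f : MvPolynomial (ι ⊕ κ) k}
    (hf : IsWeightedHomogeneous segreWeight f 0) : f ∈ (segreMap k).range := by
  rw [f.as_sum]
  refine Subalgebra.sum_mem _ fun μ hμ => ?_
  obtain ⟨d, rfl⟩ := exists_rowColSums_eq (hf (mem_support_iff.mp hμ))
  exact ⟨monomial d _, segreMap_monomial d _⟩

section Minors

variable {I : Ideal (MvPolynomial (ι × κ) k)}

lemma exists_single_le_mk_monomial_eq
    (hI : ∀ i j a b, X (i, a) * X (j, b) - X (i, b) * X (j, a) ∈ I) {d : ι × κ →₀ ℕ} {i : ι}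
    {a : κ} (hi : rowColSums d (Sum.inl i) ≠ 0) (ha : rowColSums d (Sum.inr a) ≠ 0) :
    ∃ d', rowColSums d' = rowColSums d ∧ Finsupp.single (i, a) 1 ≤ d' ∧
      Ideal.Quotient.mk I (monomial d' 1) = Ideal.Quotient.mk I (monomial d 1) := by
  by_cases hia : d (i, a) ≠ 0
  · exact ⟨d, rfl, Finsupp.single_le_iff.mpr (Nat.one_le_iff_ne_zero.mpr hia), rfl⟩
  obtain ⟨b, hb⟩ := rowColSums_inl_ne_zero_iff.mp hi
  obtain ⟨j, hj⟩ := rowColSums_inr_ne_zero_iff.mp ha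
  have hba : b ≠ a := by rintro rfl; exact hia hb
  obtain ⟨r, rfl⟩ : ∃ r, d = r + Finsupp.single (i, b) 1 + Finsupp.single (j, a) 1 := by
    have hle : Finsupp.single (i, b) 1 + Finsupp.single (j, a) 1 ≤ d := by
      classical
      rw [Finsupp.le_def]
      intro p
      simp only [Finsupp.coe_add, Pi.add_apply, Finsupp.single_apply]
      split_ifs with h₁ h₂ h₂
      · exact absurd (congrArg Prod.snd (h₁.trans h₂.symm)) hba
      · subst h₁; omega
      · subst h₂; omega
      · omega
    exact ⟨d - (Finsupp.single (i, b) 1 + Finsupp.single (j, a) 1),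
      by rw [add_assoc, tsub_add_cancel_of_le hle]⟩
  refine ⟨r + Finsupp.single (i, a) 1 + Finsupp.single (j, b) 1, ?_, ?_, ?_⟩
  · simp only [map_add, rowColSums_single]
    abel
  · exact le_add_right (le_add_left le_rfl)
  · have hsplit : ∀ r s t : ι × κ →₀ ℕ,
        monomial (r + s + t) (1 : k) = monomial r 1 * (monomial s 1 * monomial t 1) := by
      simp [monomial_mul, add_assoc]
    have hswap := Ideal.Quotient.eq.mpr (hI i j a b)
    simp only [map_mul, X] at hswap
    rw [hsplit, hsplit, map_mul, map_mul, map_mul, map_mul, hswap]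

theorem mk_monomial_eq_of_rowColSums_eq
    (hI : ∀ i j a b, X (i, a) * X (j, b) - X (i, b) * X (j, a) ∈ I) {d d' : ι × κ →₀ ℕ}
    (h : rowColSums d = rowColSums d') :
    Ideal.Quotient.mk I (monomial d 1) = Ideal.Quotient.mk I (monomial d' 1) := by
  obtain ⟨N, hN⟩ : ∃ N, d.degree = N := ⟨_, rfl⟩
  induction N generalizing d d' with
  | zero =>
    obtain rfl := (Finsupp.degree_eq_zero_iff d).mp hN
    obtain rfl : d' = 0 := by
      by_contra hd'
      obtain ⟨⟨i, a⟩, hia⟩ := Finsupp.ne_iff.mp hd'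
      exact rowColSums_inl_ne_zero_iff.mpr ⟨a, hia⟩ (by rw [← h, map_zero]; rfl)
    rfl
  | succ N ih =>
    obtain ⟨⟨i, a⟩, hia⟩ : ∃ p, d p ≠ 0 := by
      by_contra! hd
      simp [(Finsupp.degree_eq_zero_iff d).mpr (Finsupp.ext hd)] at hN
    obtain ⟨d'', hd'', hle'', hmk⟩ := exists_single_le_mk_monomial_eq hI
      (h ▸ rowColSums_inl_ne_zero_iff.mpr ⟨a, hia⟩) (h ▸ rowColSums_inr_ne_zero_iff.mpr ⟨i, hia⟩)
    obtain ⟨d₁, rfl⟩ :=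
      exists_add_of_le (Finsupp.single_le_iff.mpr (Nat.one_le_iff_ne_zero.mpr hia))
    obtain ⟨d₂, rfl⟩ := exists_add_of_le hle''
    have hd₁ : d₁.degree = N := by simp at hN; omega
    have hd₁₂ : rowColSums d₁ = rowColSums d₂ :=
      add_left_cancel (by rw [← map_add, ← map_add, h, hd''])
    rw [← hmk, ← mul_one (1 : k), ← monomial_mul, ← monomial_mul, map_mul, map_mul, ih hd₁₂ hd₁]

theorem ker_segreMap_le (hI : ∀ i j a b, X (i, a) * X (j, b) - X (i, b) * X (j, a) ∈ I) :
    RingHom.ker (segreMap k) ≤ I := by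
  classical
  -- `ψ` sends a monomial of the target to the class of any monomial over it, so `ψ ∘ segreMap`
  -- is the quotient map.
  let lift : (ι ⊕ κ →₀ ℕ) → MvPolynomial (ι × κ) k ⧸ I := fun μ =>
    if h : ∃ d, rowColSums d = μ then Ideal.Quotient.mk I (monomial h.choose 1) else 0
  let ψ := (basisMonomials (ι ⊕ κ) k).constr k lift
  have hψ : ψ ∘ₗ (segreMap k).toLinearMap = (Ideal.Quotient.mkₐ k I).toLinearMap := by
    refine linearMap_ext fun d => LinearMap.ext_ring ?_
    have hd : ∃ d', rowColSums d' = rowColSums d := ⟨d, rfl⟩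
    simp only [LinearMap.comp_apply, AlgHom.toLinearMap_apply, segreMap_monomial]
    rw [show monomial (rowColSums d) (1 : k) = basisMonomials (ι ⊕ κ) k (rowColSums d) from rfl,
      Module.Basis.constr_basis]
    simp [lift, hd, mk_monomial_eq_of_rowColSums_eq hI hd.choose_spec]
  intro p hp
  rw [← Ideal.Quotient.eq_zero_iff_mem, ← Ideal.Quotient.mkₐ_eq_mk k, ← AlgHom.toLinearMap_apply,
    ← hψ, LinearMap.comp_apply, AlgHom.toLinearMap_apply, RingHom.mem_ker.mp hp, map_zero]

end Minors

theorem exists_mem_segreMap_eq_of_mem_map {J : Ideal (MvPolynomial (ι × κ) k)}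
    {p : MvPolynomial (ι × κ) k} (hp : segreMap k p ∈ J.map (segreMap k)) :
    ∃ q ∈ J, segreMap k q = segreMap k p := by
  classical
  let ρ := weightedHomogeneousComponent (R := k) (segreWeight (ι := ι) (κ := κ)) 0
  suffices h : ∀ f ∈ J.map (segreMap k), ∀ a, ∃ q ∈ J, segreMap k q = ρ (a * f) by
    simpa [ρ, (isWeightedHomogeneous_segreMap p).weightedHomogeneousComponent_same] using
      h _ hp 1
  intro f hf
  induction hf using Submodule.span_induction with
  | mem _ hf =>
    obtain ⟨j, hj, rfl⟩ := hf
    intro a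
    obtain ⟨r, hr : segreMap k r = _⟩ :=
      mem_range_segreMap (weightedHomogeneousComponent_isWeightedHomogeneous 0 a)
    refine ⟨r * j, J.mul_mem_left r hj, ?_⟩
    rw [map_mul, hr]
    exact (weightedHomogeneousComponent_mul_of_isWeightedHomogeneous_zero
      (isWeightedHomogeneous_segreMap j) a 0).symm
  | zero => exact fun _ => ⟨0, J.zero_mem, by simp⟩
  | add f g _ _ hf hg =>
    intro a
    obtain ⟨q₁, hq₁, e₁⟩ := hf a
    obtain ⟨q₂, hq₂, e₂⟩ := hg a
    exact ⟨q₁ + q₂, J.add_mem hq₁ hq₂, by rw [map_add, e₁, e₂, mul_add, map_add]⟩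
  | smul c f _ hf => exact fun a => by simpa [mul_assoc] using hf (a * c)

theorem mem_ker_segreMap_sup_of_monomial_mul_mem {s : Set (ι × κ →₀ ℕ)} {e : ι × κ →₀ ℕ}
    (hs : ∀ d ∈ s, Disjoint (rowColSums d).support (rowColSums e).support)
    {p : MvPolynomial (ι × κ) k}
    (h : monomial e 1 * p ∈ RingHom.ker (segreMap k) ⊔ Ideal.span ((monomial · 1) '' s)) :
    p ∈ RingHom.ker (segreMap k) ⊔ Ideal.span ((monomial · 1) '' s) := by
  set J : Ideal (MvPolynomial (ι × κ) k) := Ideal.span ((monomial · 1) '' s)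
  have hJ : J.map (segreMap k) = Ideal.span ((monomial · 1) '' (rowColSums '' s)) := by
    simp only [J, Ideal.map_span, Set.image_image, segreMap_monomial]
  obtain ⟨q, hq, hqp⟩ : ∃ q ∈ J, segreMap k q = segreMap k p := by
    refine exists_mem_segreMap_eq_of_mem_map (hJ ▸ ?_)
    refine mem_ideal_span_monomial_image_of_monomial_mul_mem
      (by rintro _ ⟨d, hd, rfl⟩; exact hs d hd) ?_
    obtain ⟨a, ha, b, hb, hab⟩ := Submodule.mem_sup.mp h
    rw [← hJ, ← segreMap_monomial, ← map_mul, ← hab, map_add, RingHom.mem_ker.mp ha, zero_add]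
    exact Ideal.mem_map_of_mem _ hb
  rw [← sub_add_cancel p q]
  exact Ideal.add_mem _ (Ideal.mem_sup_left (by simp [RingHom.mem_ker, hqp]))
    (Ideal.mem_sup_right hq)

theorem isSMulRegular_quotient_span_monomials {I : Ideal (MvPolynomial (ι × κ) k)}
    (hI : RingHom.ker (segreMap k) = I) {s : Set (ι × κ →₀ ℕ)} {e : ι × κ →₀ ℕ}
    (hs : ∀ d ∈ s, Disjoint (rowColSums d).support (rowColSums e).support) :
    IsSMulRegular
      ((MvPolynomial (ι × κ) k ⧸ I) ⧸ Ideal.span (Ideal.Quotient.mk I '' ((monomial · 1) '' s)))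
      (Ideal.Quotient.mk I (monomial e 1)) := by
  have hmem : ∀ p, Ideal.Quotient.mk I p ∈
      Ideal.span (Ideal.Quotient.mk I '' ((monomial · 1) '' s)) ↔
      p ∈ RingHom.ker (segreMap k) ⊔ Ideal.span ((monomial · 1) '' s) := fun p => by
    rw [← Ideal.map_span, ← Ideal.mem_comap, Ideal.comap_map_of_surjective _
      Ideal.Quotient.mk_surjective, ← RingHom.ker_eq_comap_bot, Ideal.mk_ker, hI, sup_comm]
  rw [isSMulRegular_quotient_iff_mem_of_smul_mem]
  intro x hx
  obtain ⟨p, rfl⟩ := Ideal.Quotient.mk_surjective x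
  rw [smul_eq_mul, ← map_mul, hmem] at hx
  exact (hmem p).mpr (mem_ker_segreMap_sup_of_monomial_mul_mem hs hx)

end Segre

lemma minor_mem_detIdeal (k : Type*) [CommRing k] (i j a b : Fin 3) :
    X (i, a) * X (j, b) - X (i, b) * X (j, a) ∈ DetIdeal k := by
  have hgen : ∀ i j a b : Fin 3, i < j → a < b →
      X (i, a) * X (j, b) - X (i, b) * X (j, a) ∈ DetIdeal k :=
    fun i j a b hij hab => Ideal.subset_span ⟨i, j, a, b, hij, hab, rfl⟩
  rcases lt_trichotomy i j with hij | rfl | hij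
  · rcases lt_trichotomy a b with hab | rfl | hab
    · exact hgen i j a b hij hab
    · simp
    · rw [← neg_mem_iff]
      convert hgen i j b a hij hab using 1
      ring
  · simp [mul_comm]
  · rcases lt_trichotomy a b with hab | rfl | hab
    · rw [← neg_mem_iff]
      convert hgen j i a b hij hab using 1
      ring
    · simp
    · convert hgen j i b a hij hab using 1
      ring

theorem ker_segreMap_eq_detIdeal (k : Type*) [CommRing k] :
    RingHom.ker (segreMap k) = DetIdeal k := by
  refine le_antisymm (ker_segreMap_le (minor_mem_detIdeal k)) ?_
  rw [DetIdeal, Ideal.span_le]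
  rintro _ ⟨i, j, a, b, -, -, rfl⟩
  simp only [SetLike.mem_coe, RingHom.mem_ker, map_sub, map_mul, segreMap, aeval_X]
  ring

theorem x33_regular_on_quotient_general
    (k : Type u) [Field k] (n : ℕ) :
    IsSMulRegular (DetRing k ⧸ Ideal.span {xvar k 0 0 ^ n, xvar k 0 1 ^ n}) (xvar k 2 2) := by
  have hx : ∀ i j m, xvar k i j ^ m =
      Ideal.Quotient.mk (DetIdeal k) (monomial (Finsupp.single (i, j) m) 1) := fun i j m => by
    rw [xvar, ← map_pow, X_pow_eq_monomial]
  have hgens : {xvar k 0 0 ^ n, xvar k 0 1 ^ n} = Ideal.Quotient.mk (DetIdeal k) ''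
      ((monomial · (1 : k)) '' {Finsupp.single (0, 0) n, Finsupp.single (0, 1) n}) := by
    simp only [Set.image_pair, hx]
  rw [hgens, ← pow_one (xvar k 2 2), hx]
  refine isSMulRegular_quotient_span_monomials (ker_segreMap_eq_detIdeal k) ?_
  rintro d (rfl | rfl) <;> simp [Finset.disjoint_left, Finsupp.single_apply]

/-- **Lemma 3.4 (Gröbner basis part).**  Let `k` be an arbitrary field and `A = k[X]/I_2` the
determinantal ring of 2×2 minors of the generic 3×3 matrix.  Then for every `n ≥ 2`, the
element `x_{33}` is a nonzerodivisor on `A/(x_{11}^n, x_{12}^n)`. -/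
theorem x33_regular_on_quotient
    (k : Type u) [Field k] (n : ℕ) (hn : 2 ≤ n) :
    IsSMulRegular (DetRing k ⧸ Ideal.span {xvar k 0 0 ^ n, xvar k 0 1 ^ n}) (xvar k 2 2) :=
  x33_regular_on_quotient_general k n

end
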